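/- arXiv:1310.7122 — 4 statements merged into one kernel-verified Lean document; each statement's English description precedes it below -/
import Mathlib

section
/- Let D₁ and D₂ be subsets of ℂ with disjoint closures, each of which is either an open disk, an open half-plane, or the complement of a closed disk. Let p and q be nonzero polynomials over ℂ with deg p + deg q ≥ 1, such that every complex root of p lies in D₁ and every complex root of q lies in D₂; assume moreover that if deg p > deg q then D₂ is the complement of a closed disk, and if deg p < deg q then D₁ is the complement of a closed disk. Then every complex root of the polynomial p'·q − p·q' lies in D₁ ∪ D₂. -/
/-!
Let `z ∉ D₁ ∪ D₂` be a critical point. Then `p'(z)/p(z) = q'(z)/q(z)`: the sums of `1/(z - a)`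
over the zeros of `p` and over the zeros of `q` agree. Each face is `{w | A|w|² + Re(Bw) + C < 0}`,
and its image under `w ↦ 1/(z - w)` (sending `∞` to `0`) has the same shape, with leading
coefficient the value of the form at `z`, hence `≥ 0`; so the image `Eᵢ` of `Dᵢ` is convex.
Dividing the common sum by `N = max (deg p) (deg q)` makes it a mean of `N` points of `E₁` (the
images of the zeros of `p`, padded with `0`, which the degree condition puts in `E₁`) and likewise
of `E₂`. A common point of `E₁` and `E₂` pulls back to a common point of `D₁` and `D₂`, or to `∞`,
in which case both faces are exteriors of disks and meet anyway.
-/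

open Polynomial

/-- `D` is an open disk in `ℂ`. -/
def IsOpenDisk (D : Set ℂ) : Prop :=
  ∃ c : ℂ, ∃ r : ℝ, 0 < r ∧ D = Metric.ball c r

/-- `D` is an open half-plane in `ℂ`. -/
def IsOpenHalfPlane (D : Set ℂ) : Prop :=
  ∃ a : ℂ, a ≠ 0 ∧ ∃ t : ℝ, D = {z : ℂ | (a * z).re < t}

/-- `D` is the complement of a closed disk in `ℂ`. -/
def IsCoClosedDisk (D : Set ℂ) : Prop :=
  ∃ c : ℂ, ∃ r : ℝ, 0 < r ∧ D = (Metric.closedBall c r)ᶜ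

open ComplexConjugate Filter Set

section ConvexMean

variable {𝕜 E : Type*} [Field 𝕜] [LinearOrder 𝕜] [IsStrictOrderedRing 𝕜] [AddCommGroup E]
  [Module 𝕜 E] {S : Set E}

theorem Convex.inv_card_smul_sum_mem (hS : Convex 𝕜 S) {s : Multiset E} (hs : s ≠ 0)
    (h : ∀ x ∈ s, x ∈ S) : (Multiset.card s : 𝕜)⁻¹ • s.sum ∈ S := by
  classical
  have hcard : (Multiset.card s : 𝕜) ≠ 0 := by
    exact_mod_cast (Multiset.card_pos.2 hs).ne'
  rw [Finset.sum_multiset_count, Finset.smul_sum]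
  simp_rw [← Nat.cast_smul_eq_nsmul 𝕜, smul_smul]
  refine hS.sum_mem (fun x _ => by positivity) ?_ fun x hx => h x (Multiset.mem_toFinset.1 hx)
  rw [← Finset.mul_sum, ← Nat.cast_sum, Multiset.toFinset_sum_count_eq, inv_mul_cancel₀ hcard]

theorem Convex.inv_smul_sum_mem_of_card_le (hS : Convex 𝕜 S) {s : Multiset E}
    (h : ∀ x ∈ s, x ∈ S) {N : ℕ} (hN : 0 < N) (hcard : Multiset.card s ≤ N)
    (h₀ : Multiset.card s < N → (0 : E) ∈ S) : (N : 𝕜)⁻¹ • s.sum ∈ S := by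
  set t := s + Multiset.replicate (N - Multiset.card s) 0
  have ht : Multiset.card t = N := by simp [t]; omega
  have hmem : ∀ x ∈ t, x ∈ S := by
    intro x hx
    rcases Multiset.mem_add.1 hx with hx | hx
    · exact h x hx
    · obtain ⟨hpad, rfl⟩ := Multiset.mem_replicate.1 hx
      exact h₀ (by omega)
  have := hS.inv_card_smul_sum_mem (by rw [← Multiset.card_pos, ht]; exact hN) hmem
  simpa [t, ht] using this

end ConvexMean

/-- Faces of generalized circles are the sets `{w | circleForm A B C w < 0}`; such a face is
unbounded, i.e. contains `∞`, iff `A < 0`. -/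
noncomputable def circleForm (A : ℝ) (B : ℂ) (C : ℝ) (w : ℂ) : ℝ :=
  A * Complex.normSq w + (B * w).re + C

/-- The form whose face is the image of the face of `circleForm A B C` under `w ↦ (z - w)⁻¹`,
with `∞ ↦ 0`. -/
noncomputable def invCircleForm (A : ℝ) (B : ℂ) (C : ℝ) (z : ℂ) : ℂ → ℝ :=
  circleForm (circleForm A B C z) (-(2 * A * z + conj B)) A

section CircleForm

variable {A : ℝ} {B : ℂ} {C : ℝ}

theorem IsOpenDisk.exists_circleForm {D : Set ℂ} (h : IsOpenDisk D) :
    ∃ B C, D = {w | circleForm 1 B C w < 0} := by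
  obtain ⟨c, r, hr, rfl⟩ := h
  refine ⟨-2 * conj c, Complex.normSq c - r ^ 2, Set.ext fun w => ?_⟩
  have hre : (-2 * conj c * w).re = -2 * (w * conj c).re := by simp [mul_comm w]; ring
  rw [Metric.mem_ball, Complex.dist_eq, ← sq_lt_sq₀ (norm_nonneg _) hr.le, Complex.sq_norm,
    Complex.normSq_sub, mem_ofPred_eq, circleForm, hre]
  constructor <;> intro h <;> linarith

theorem IsCoClosedDisk.exists_circleForm {D : Set ℂ} (h : IsCoClosedDisk D) :
    ∃ B C, D = {w | circleForm (-1) B C w < 0} := by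
  obtain ⟨c, r, hr, rfl⟩ := h
  refine ⟨2 * conj c, r ^ 2 - Complex.normSq c, Set.ext fun w => ?_⟩
  have hre : (2 * conj c * w).re = 2 * (w * conj c).re := by simp [mul_comm w]; ring
  rw [mem_compl_iff, Metric.mem_closedBall, Complex.dist_eq, not_le,
    ← sq_lt_sq₀ hr.le (norm_nonneg _), Complex.sq_norm, Complex.normSq_sub, mem_ofPred_eq,
    circleForm, hre]
  constructor <;> intro h <;> linarith

theorem IsOpenHalfPlane.exists_circleForm {D : Set ℂ} (h : IsOpenHalfPlane D) :
    ∃ B C, D = {w | circleForm 0 B C w < 0} := by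
  obtain ⟨a, -, t, rfl⟩ := h
  exact ⟨a, -t, Set.ext fun w => by simp [circleForm, ← sub_eq_add_neg]⟩

theorem exists_circleForm {D : Set ℂ} (h : IsOpenDisk D ∨ IsOpenHalfPlane D ∨ IsCoClosedDisk D)
    {P : Prop} (hP : P → IsCoClosedDisk D) :
    ∃ A B C, D = {w | circleForm A B C w < 0} ∧ (P → A < 0) := by
  by_cases hp : P
  · obtain ⟨B, C, hD⟩ := (hP hp).exists_circleForm
    exact ⟨-1, B, C, hD, fun _ => neg_one_lt_zero⟩
  rcases h with h | h | h
  · obtain ⟨B, C, hD⟩ := h.exists_circleForm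
    exact ⟨1, B, C, hD, fun h => absurd h hp⟩
  · obtain ⟨B, C, hD⟩ := h.exists_circleForm
    exact ⟨0, B, C, hD, fun h => absurd h hp⟩
  · obtain ⟨B, C, hD⟩ := h.exists_circleForm
    exact ⟨-1, B, C, hD, fun _ => neg_one_lt_zero⟩

theorem circleForm_sub_inv_mul_normSq (z : ℂ) {u : ℂ} (hu : u ≠ 0) :
    circleForm A B C (z - u⁻¹) * Complex.normSq u = invCircleForm A B C z u := by
  have hu' : u.re ^ 2 + u.im ^ 2 ≠ 0 := by
    rw [sq, sq, ← Complex.normSq_apply]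
    exact mt Complex.normSq_eq_zero.1 hu
  simp only [invCircleForm, circleForm, Complex.normSq_apply, Complex.mul_re, Complex.mul_im,
    Complex.sub_re, Complex.sub_im, Complex.inv_re, Complex.inv_im, Complex.neg_re, Complex.add_re,
    Complex.conj_re, Complex.ofReal_re, Complex.ofReal_im, ← sq]
  field_simp
  norm_num
  ring

theorem convexOn_circleForm (hA : 0 ≤ A) : ConvexOn ℝ univ (circleForm A B C) := by
  have hsq : ConvexOn ℝ univ fun w : ℂ => Complex.normSq w := by
    rw [show (fun w : ℂ => Complex.normSq w) = norm ^ 2 from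
      funext fun w => (Complex.sq_norm w).symm]
    exact (convexOn_norm convex_univ).pow (fun w _ => norm_nonneg w) 2
  have hre : ConvexOn ℝ univ fun w : ℂ => (B * w).re :=
    (Complex.reLm.comp ((LinearMap.mulLeft ℂ B).restrictScalars ℝ)).convexOn convex_univ
  exact ((hsq.smul hA).add hre).add_const C

theorem eventually_circleForm_ofReal_neg (hA : A < 0) :
    ∀ᶠ x : ℝ in atTop, circleForm A B C x < 0 := by
  refine eventually_atTop.2 ⟨(|B.re| + |C|) / -A + 1, fun x hx => ?_⟩
  have hbound : |B.re| + |C| + -A ≤ -A * x := by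
    have := mul_le_mul_of_nonneg_left hx (neg_nonneg.2 hA.le)
    rwa [mul_add, mul_div_cancel₀ _ (neg_ne_zero.2 hA.ne), mul_one] at this
  have hx1 : 1 ≤ x := by nlinarith [abs_nonneg B.re, abs_nonneg C]
  simp only [circleForm, Complex.normSq_ofReal, Complex.mul_re, Complex.ofReal_re,
    Complex.ofReal_im, mul_zero, sub_zero]
  nlinarith [le_abs_self B.re, le_abs_self C, abs_nonneg C]

theorem invCircleForm_neg_iff (z : ℂ) {u : ℂ} (hu : u ≠ 0) :
    invCircleForm A B C z u < 0 ↔ circleForm A B C (z - u⁻¹) < 0 := by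
  have hu' := Complex.normSq_pos.2 hu
  rw [← circleForm_sub_inv_mul_normSq z hu]
  exact ⟨fun h => neg_of_mul_neg_left h hu'.le, fun h => mul_neg_of_neg_of_pos h hu'⟩

theorem invCircleForm_zero (z : ℂ) : invCircleForm A B C z 0 = A := by
  simp [invCircleForm, circleForm]

theorem convex_setOf_invCircleForm_neg {z : ℂ} (hz : 0 ≤ circleForm A B C z) :
    Convex ℝ {u | invCircleForm A B C z u < 0} := by
  have h := (convexOn_circleForm (B := -(2 * A * z + conj B)) (C := A) hz).convex_lt 0
  simp only [mem_univ, true_and] at h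
  exact h

theorem exists_circleForm_neg_of_invCircleForm_neg {A₁ A₂ C₁ C₂ : ℝ} {B₁ B₂ z u : ℂ}
    (h₁ : invCircleForm A₁ B₁ C₁ z u < 0) (h₂ : invCircleForm A₂ B₂ C₂ z u < 0) :
    ∃ w, circleForm A₁ B₁ C₁ w < 0 ∧ circleForm A₂ B₂ C₂ w < 0 := by
  rcases eq_or_ne u 0 with rfl | hu
  · rw [invCircleForm_zero] at h₁ h₂
    obtain ⟨x, hx⟩ :=
      ((eventually_circleForm_ofReal_neg (B := B₁) (C := C₁) h₁).and
        (eventually_circleForm_ofReal_neg (B := B₂) (C := C₂) h₂)).exists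
    exact ⟨x, hx⟩
  · exact ⟨z - u⁻¹, (invCircleForm_neg_iff z hu).1 h₁, (invCircleForm_neg_iff z hu).1 h₂⟩

theorem Polynomial.invCircleForm_inv_smul_sum_roots_neg {p : ℂ[X]} {z : ℂ}
    (hroots : ∀ a, p.IsRoot a → circleForm A B C a < 0) (hz : 0 ≤ circleForm A B C z)
    {N : ℕ} (hN : 0 < N) (hdeg : p.natDegree ≤ N) (hinf : p.natDegree < N → A < 0) :
    invCircleForm A B C z ((N : ℝ)⁻¹ • (p.roots.map fun a => 1 / (z - a)).sum) < 0 := by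
  have hcard : Multiset.card (p.roots.map fun a => 1 / (z - a)) = p.natDegree := by
    rw [Multiset.card_map, IsAlgClosed.card_roots_eq_natDegree]
  refine (convex_setOf_invCircleForm_neg hz).inv_smul_sum_mem_of_card_le ?_ hN (hcard ▸ hdeg)
    fun h => by rw [mem_ofPred_eq, invCircleForm_zero]; exact hinf (hcard ▸ h)
  intro u hu
  obtain ⟨a, ha, rfl⟩ := Multiset.mem_map.1 hu
  have ha' := hroots a (isRoot_of_mem_roots ha)
  have hza : z - a ≠ 0 := sub_ne_zero.2 fun h => (h ▸ hz).not_gt ha'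
  rwa [mem_ofPred_eq, invCircleForm_neg_iff z (one_div_ne_zero hza), one_div, inv_inv,
    sub_sub_cancel]

end CircleForm

theorem Polynomial.sum_roots_one_div_sub_eq {K : Type*} [Field K] [IsAlgClosed K] {p q : K[X]}
    {z : K} (hz : (derivative p * q - p * derivative q).IsRoot z) (hp : p.eval z ≠ 0)
    (hq : q.eval z ≠ 0) :
    (p.roots.map fun a => 1 / (z - a)).sum = (q.roots.map fun a => 1 / (z - a)).sum := by
  have h := hz.eq_zero
  rw [eval_sub, eval_mul, eval_mul, (IsAlgClosed.splits p).eval_derivative_eq_eval_mul_sum hp,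
    (IsAlgClosed.splits q).eval_derivative_eq_eval_mul_sum hq] at h
  exact mul_left_cancel₀ (mul_ne_zero hp hq) (by linear_combination h)

theorem bocher_theorem_general (D₁ D₂ : Set ℂ)
    (h₁ : IsOpenDisk D₁ ∨ IsOpenHalfPlane D₁ ∨ IsCoClosedDisk D₁)
    (h₂ : IsOpenDisk D₂ ∨ IsOpenHalfPlane D₂ ∨ IsCoClosedDisk D₂)
    (hdisj : Disjoint (closure D₁) (closure D₂))
    (p q : Polynomial ℂ)
    (hdeg : 1 ≤ p.natDegree + q.natDegree)
    (hproots : ∀ z : ℂ, p.IsRoot z → z ∈ D₁)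
    (hqroots : ∀ z : ℂ, q.IsRoot z → z ∈ D₂)
    (hpq : p.natDegree > q.natDegree → IsCoClosedDisk D₂)
    (hqp : p.natDegree < q.natDegree → IsCoClosedDisk D₁) :
    ∀ z : ℂ, (derivative p * q - p * derivative q).IsRoot z → z ∈ D₁ ∪ D₂ := by
  intro z hz
  by_contra hzD
  obtain ⟨hz₁, hz₂⟩ := not_or.1 hzD
  obtain ⟨A₁, B₁, C₁, rfl, hA₁⟩ := exists_circleForm h₁ hqp
  obtain ⟨A₂, B₂, C₂, rfl, hA₂⟩ := exists_circleForm h₂ hpq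
  have hsum := sum_roots_one_div_sub_eq hz (fun h => hz₁ (hproots z h))
    (fun h => hz₂ (hqroots z h))
  have hN : 0 < max p.natDegree q.natDegree := by omega
  have hp := invCircleForm_inv_smul_sum_roots_neg hproots (not_lt.1 hz₁) hN (le_max_left _ _)
    fun h => hA₁ (by omega)
  have hq := invCircleForm_inv_smul_sum_roots_neg hqroots (not_lt.1 hz₂) hN (le_max_right _ _)
    fun h => hA₂ (by omega)
  rw [← hsum] at hq
  obtain ⟨w, hw₁, hw₂⟩ := exists_circleForm_neg_of_invCircleForm_neg hp hq
  exact (hdisj.mono subset_closure subset_closure).ne_of_mem hw₁ hw₂ rfl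

/-- **Bôcher's theorem** (extension of the Gauss–Lucas theorem to rational functions).
If all the roots of `p` lie in `D₁`, all the roots of `q` lie in `D₂`, where `D₁`, `D₂` are
faces (with disjoint closures) of two circles on the Riemann sphere, and the degree
conditions encode the behavior of `p/q` at infinity, then all finite critical points of
`p/q`, i.e. the roots of `p'·q − p·q'`, lie in `D₁ ∪ D₂`. -/
theorem bocher_theorem (D₁ D₂ : Set ℂ)
    (h₁ : IsOpenDisk D₁ ∨ IsOpenHalfPlane D₁ ∨ IsCoClosedDisk D₁)
    (h₂ : IsOpenDisk D₂ ∨ IsOpenHalfPlane D₂ ∨ IsCoClosedDisk D₂)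
    (hdisj : Disjoint (closure D₁) (closure D₂))
    (p q : Polynomial ℂ) (hp : p ≠ 0) (hq : q ≠ 0)
    (hdeg : 1 ≤ p.natDegree + q.natDegree)
    (hproots : ∀ z : ℂ, p.IsRoot z → z ∈ D₁)
    (hqroots : ∀ z : ℂ, q.IsRoot z → z ∈ D₂)
    (hpq : p.natDegree > q.natDegree → IsCoClosedDisk D₂)
    (hqp : p.natDegree < q.natDegree → IsCoClosedDisk D₁) :
    ∀ z : ℂ, (derivative p * q - p * derivative q).IsRoot z → z ∈ D₁ ∪ D₂ :=
  bocher_theorem_general D₁ D₂ h₁ h₂ hdisj p q hdeg hproots hqroots hpq hqp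
end

section
/- For every integer n ≥ 2, every v ∈ ℂⁿ⁻¹, and every ρ > 0, there exists ν > 0 such that: for every v̂ ∈ ℂⁿ⁻¹ with ‖v − v̂‖ < ν and every û ∈ ℂⁿ⁻¹ with Θ(û) = v̂, there exists u ∈ ℂⁿ⁻¹ with Θ(u) = v and ‖u − û‖ < ρ. -/
/-!
`Θ` is continuous and homogeneous, `Θ (c • u) = cⁿ • Θ u`, and vanishes only at `u = 0`: if all
critical values of `p = p_u` vanish, every critical point of multiplicity `k` is a root of `p` of
multiplicity `k + 1`, so counting the at most `n` roots of `p` leaves room for a single critical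
point `w`; then `p = (X - w)ⁿ` and `p(0) = 0` forces `w = 0`. Minimising `‖Θ‖` on the unit sphere
gives `‖Θ u‖ ≥ c ‖u‖ⁿ`, so `Θ` is proper, hence closed, and for a closed map the fibres over points
near `v` lie in any neighbourhood of the fibre over `v`.
-/

open Polynomial

/-- The formal antiderivative (with zero constant term) of a complex polynomial. -/
noncomputable def polyAntideriv (q : Polynomial ℂ) : Polynomial ℂ :=
  q.sum fun k a => Polynomial.C (a / ((k : ℂ) + 1)) * Polynomial.X ^ (k + 1)

/-- For `u ∈ ℂᵐ`, `criticalPoly u` is the unique monic polynomial `p` of degree `m + 1`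
with `p(0) = 0` and `p' = (m + 1)·∏ᵢ (X − uᵢ)`; its critical points are prescribed by `u`. -/
noncomputable def criticalPoly {m : ℕ} (u : Fin m → ℂ) : Polynomial ℂ :=
  polyAntideriv (Polynomial.C ((m : ℂ) + 1) * ∏ i, (Polynomial.X - Polynomial.C (u i)))

/-- The map `Θ` sending a list of prescribed critical points to the corresponding list of
critical values. -/
noncomputable def Theta {m : ℕ} (u : Fin m → ℂ) : Fin m → ℂ :=
  fun i => (criticalPoly u).eval (u i)

/-- `V_m`: the set of `v ∈ ℂᵐ` with `0 ≤ |v 0| ≤ ⋯ ≤ |v (m-1)| < 1`. -/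
def Vset (m : ℕ) : Set (Fin m → ℂ) :=
  {v | (Monotone fun i => ‖v i‖) ∧ ∀ i, ‖v i‖ < 1}

namespace Polynomial

section Derivative

variable {R : Type*} [Ring R] [IsAddTorsionFree R]

theorem eq_of_derivative_eq_of_eval_eq {p q : R[X]} (hd : derivative p = derivative q) {a : R}
    (ha : p.eval a = q.eval a) : p = q := by
  have hC := eq_C_of_derivative_eq_zero (p := p - q) (by rw [derivative_sub, hd, sub_self])
  have h0 : (p - q).coeff 0 = 0 := by simpa [ha] using (congrArg (eval a) hC).symm
  rwa [h0, C_0, sub_eq_zero] at hC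

end Derivative

section RootCount

variable {K : Type*} [Field K] [CharZero K] [DecidableEq K]

theorem count_roots_derivative_add_one {p : K[X]} (hp : p ≠ 0) {w : K} (hw : p.IsRoot w) :
    (derivative p).roots.count w + 1 = p.roots.count w := by
  rw [count_roots, count_roots, derivative_rootMultiplicity_of_root hw,
    Nat.sub_add_cancel ((rootMultiplicity_pos hp).2 hw)]

theorem card_roots_derivative_add_card_toFinset_le {p : K[X]} (hp : p ≠ 0)
    (h : ∀ w ∈ (derivative p).roots, p.IsRoot w) :
    Multiset.card (derivative p).roots + (derivative p).roots.toFinset.card ≤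
      Multiset.card p.roots := by
  set T := (derivative p).roots.toFinset
  have hT : T ⊆ p.roots.toFinset := fun w hw => by
    rw [Multiset.mem_toFinset, mem_roots hp]
    exact h w (Multiset.mem_toFinset.1 hw)
  calc Multiset.card (derivative p).roots + T.card
      = ∑ w ∈ T, ((derivative p).roots.count w + 1) := by
        rw [Finset.sum_add_distrib, Multiset.toFinset_sum_count_eq, Finset.card_eq_sum_ones]
    _ = ∑ w ∈ T, p.roots.count w := Finset.sum_congr rfl fun w hw =>
        count_roots_derivative_add_one hp (h w (Multiset.mem_toFinset.1 hw))
    _ ≤ ∑ w ∈ p.roots.toFinset, p.roots.count w := Finset.sum_le_sum_of_subset hT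
    _ = Multiset.card p.roots := Multiset.toFinset_sum_count_eq _

end RootCount

section Continuity

variable {R : Type*} [CommRing R] [TopologicalSpace R] [IsTopologicalRing R]

theorem continuous_coeff_prod_X_sub_C {ι : Type*} [DecidableEq ι] (s : Finset ι) (k : ℕ) :
    Continuous fun u : ι → R => (∏ i ∈ s, (X - C (u i))).coeff k := by
  induction s using Finset.induction generalizing k with
  | empty => simpa only [Finset.prod_empty] using continuous_const
  | insert a s ha ih =>
    simp only [Finset.prod_insert ha, sub_mul, coeff_sub, coeff_C_mul]
    cases k with
    | zero =>
      simp only [mul_coeff_zero, coeff_X_zero, zero_mul, zero_sub]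
      exact ((continuous_apply a).mul (ih 0)).neg
    | succ k =>
      simp only [coeff_X_mul]
      exact (ih k).sub ((continuous_apply a).mul (ih (k + 1)))

theorem continuous_eval_of_continuous_coeff {Z : Type*} [TopologicalSpace Z] {p : Z → R[X]}
    {N : ℕ} (hdeg : ∀ z, (p z).natDegree < N) (hcoeff : ∀ k, Continuous fun z => (p z).coeff k)
    {g : Z → R} (hg : Continuous g) : Continuous fun z => (p z).eval (g z) := by
  simp_rw [eval_eq_sum_range' (hdeg _)]
  exact continuous_finsetSum _ fun k _ => (hcoeff k).mul (hg.pow k)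

end Continuity

end Polynomial

section Homogeneous

open Filter Metric

variable {E F : Type*} [NormedAddCommGroup E] [NormedSpace ℝ E] [ProperSpace E]
  [NormedAddCommGroup F] [NormedSpace ℝ F] {f : E → F} {k : ℕ}

theorem exists_pos_mul_norm_pow_le_norm_of_homogeneous (hk : k ≠ 0) (hf : Continuous f)
    (hhom : ∀ t : ℝ, 0 < t → ∀ x, f (t • x) = t ^ k • f x) (hzero : ∀ x, f x = 0 → x = 0) :
    ∃ C > 0, ∀ x, C * ‖x‖ ^ k ≤ ‖f x‖ := by
  rcases subsingleton_or_nontrivial E with hE | hE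
  · exact ⟨1, one_pos, fun x => by simp [Subsingleton.elim x 0, zero_pow hk]⟩
  obtain ⟨x₀, hx₀, hmin⟩ := (isCompact_sphere (0 : E) 1).exists_isMinOn
    (NormedSpace.sphere_nonempty.2 zero_le_one) hf.norm.continuousOn
  have hx₀0 : x₀ ≠ 0 := ne_zero_of_mem_unit_sphere ⟨x₀, hx₀⟩
  refine ⟨‖f x₀‖, norm_pos_iff.2 fun h => hx₀0 (hzero _ h), fun x => ?_⟩
  rcases eq_or_ne x 0 with rfl | hx
  · simp [zero_pow hk]
  have hxn : 0 < ‖x‖ := norm_pos_iff.2 hx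
  have hfx : f x = ‖x‖ ^ k • f (‖x‖⁻¹ • x) := by rw [← hhom _ hxn, smul_inv_smul₀ hxn.ne']
  have hunit : ‖x‖⁻¹ • x ∈ sphere (0 : E) 1 := by simp [norm_smul, hxn.ne']
  calc ‖f x₀‖ * ‖x‖ ^ k ≤ ‖f (‖x‖⁻¹ • x)‖ * ‖x‖ ^ k := by gcongr; exact hmin hunit
    _ = ‖f x‖ := by rw [hfx, norm_smul, norm_pow, norm_norm, mul_comm]

theorem isProperMap_of_homogeneous (hk : k ≠ 0) (hf : Continuous f)
    (hhom : ∀ t : ℝ, 0 < t → ∀ x, f (t • x) = t ^ k • f x) (hzero : ∀ x, f x = 0 → x = 0) :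
    IsProperMap f := by
  obtain ⟨C, hC, hbound⟩ := exists_pos_mul_norm_pow_le_norm_of_homogeneous hk hf hhom hzero
  refine isProperMap_iff_tendsto_cocompact.2 ⟨hf, ?_⟩
  rw [← cobounded_eq_cocompact]
  refine Tendsto.mono_right ?_ cobounded_le_cocompact
  rw [← tendsto_norm_atTop_iff_cobounded]
  exact tendsto_atTop_mono hbound
    (((tendsto_pow_atTop hk).comp tendsto_norm_cobounded_atTop).const_mul_atTop hC)

end Homogeneous

open Topology in
theorem IsClosedMap.eventually_forall_fiber_exists_dist_lt {X Y : Type*} [PseudoMetricSpace X]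
    [TopologicalSpace Y] {f : X → Y} (hf : IsClosedMap f) (y₀ : Y) {ρ : ℝ} (hρ : 0 < ρ) :
    ∀ᶠ y in 𝓝 y₀, ∀ x ∈ f ⁻¹' {y}, ∃ x₀ ∈ f ⁻¹' {y₀}, dist x₀ x < ρ :=
  hf.eventually_nhds_fiber y₀ fun x₀ hx₀ =>
    Filter.eventually_of_mem (Metric.ball_mem_nhds x₀ hρ) fun _ hx =>
      ⟨x₀, hx₀, Metric.mem_ball'.1 hx⟩

section CriticalPoly

variable {m : ℕ}

theorem derivative_polyAntideriv (q : ℂ[X]) : derivative (polyAntideriv q) = q := by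
  conv_rhs => rw [← sum_C_mul_X_pow_eq q]
  simp only [polyAntideriv, Polynomial.sum, derivative_sum, derivative_C_mul_X_pow]
  refine Finset.sum_congr rfl fun k _ => ?_
  have hk : (k : ℂ) + 1 ≠ 0 := by exact_mod_cast k.succ_ne_zero
  rw [Nat.add_sub_cancel, Nat.cast_succ, div_mul_cancel₀ _ hk]

theorem eval_zero_polyAntideriv (q : ℂ[X]) : (polyAntideriv q).eval 0 = 0 := by
  simp [polyAntideriv, Polynomial.sum, eval_finsetSum]

theorem derivative_criticalPoly (u : Fin m → ℂ) :
    derivative (criticalPoly u) = C ((m : ℂ) + 1) * ∏ i, (X - C (u i)) :=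
  derivative_polyAntideriv _

theorem eval_zero_criticalPoly (u : Fin m → ℂ) : (criticalPoly u).eval 0 = 0 :=
  eval_zero_polyAntideriv _

theorem natDegree_criticalPoly_le (u : Fin m → ℂ) : (criticalPoly u).natDegree ≤ m + 1 := by
  have h := congrArg natDegree (derivative_criticalPoly u)
  rw [natDegree_derivative, natDegree_C_mul (by exact_mod_cast m.succ_ne_zero),
    natDegree_prod_of_monic _ _ fun i _ => monic_X_sub_C (u i)] at h
  simp only [natDegree_X_sub_C, Finset.sum_const, Finset.card_univ, Fintype.card_fin,
    smul_eq_mul, mul_one] at h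
  omega

theorem coeff_criticalPoly_succ (u : Fin m → ℂ) (k : ℕ) :
    (criticalPoly u).coeff (k + 1) = ((m : ℂ) + 1) * (∏ i, (X - C (u i))).coeff k / (k + 1) := by
  have hk : (k : ℂ) + 1 ≠ 0 := by exact_mod_cast k.succ_ne_zero
  rw [← coeff_C_mul, ← derivative_criticalPoly, coeff_derivative, mul_div_cancel_right₀ _ hk]

theorem continuous_theta : Continuous (Theta (m := m)) := by
  refine continuous_pi fun i => continuous_eval_of_continuous_coeff (N := m + 2)
    (fun u => (natDegree_criticalPoly_le u).trans_lt (Nat.lt_succ_self _)) (fun k => ?_)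
    (continuous_apply i)
  cases k with
  | zero => simpa only [coeff_zero_eq_eval_zero, eval_zero_criticalPoly] using continuous_const
  | succ k =>
    simp_rw [coeff_criticalPoly_succ]
    exact (continuous_const.mul (continuous_coeff_prod_X_sub_C _ k)).div_const _

theorem criticalPoly_smul {c : ℂ} (hc : c ≠ 0) (u : Fin m → ℂ) :
    criticalPoly (c • u) = C (c ^ (m + 1)) * (criticalPoly u).comp (C c⁻¹ * X) := by
  refine eq_of_derivative_eq_of_eval_eq ?_ (a := 0) (by simp [eval_zero_criticalPoly])
  have hC : C c * C c⁻¹ = (1 : ℂ[X]) := by rw [← C_mul, mul_inv_cancel₀ hc, C_1]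
  have hfactor : ∀ i, X - C (c * u i) = C c * (C c⁻¹ * X - C (u i)) := fun i => by
    rw [mul_sub, ← mul_assoc, hC, one_mul, ← C_mul]
  rw [derivative_C_mul, derivative_comp, derivative_C_mul_X, derivative_criticalPoly,
    derivative_criticalPoly, mul_comp, C_comp, prod_comp]
  simp only [Pi.smul_apply, smul_eq_mul, hfactor, sub_comp, C_comp, X_comp,
    Finset.prod_mul_distrib, Finset.prod_const, Finset.card_univ, Fintype.card_fin, C_pow]
  linear_combination (-(C ((m : ℂ) + 1) * C c ^ m * ∏ i, (C c⁻¹ * X - C (u i)))) * hC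

theorem theta_smul {c : ℂ} (hc : c ≠ 0) (u : Fin m → ℂ) :
    Theta (c • u) = c ^ (m + 1) • Theta u := by
  funext i
  simp only [Theta, Pi.smul_apply, smul_eq_mul]
  rw [criticalPoly_smul hc, eval_mul, eval_C, eval_comp, eval_mul, eval_C, eval_X,
    inv_mul_cancel_left₀ hc]

theorem criticalPoly_ne_zero (u : Fin m → ℂ) : criticalPoly u ≠ 0 := by
  have hd : derivative (criticalPoly u) ≠ 0 := by
    rw [derivative_criticalPoly]
    exact mul_ne_zero (C_ne_zero.2 (by exact_mod_cast m.succ_ne_zero))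
      (monic_prod_of_monic _ _ fun i _ => monic_X_sub_C _).ne_zero
  exact fun h => hd (by rw [h, derivative_zero])

theorem roots_derivative_criticalPoly (u : Fin m → ℂ) :
    (derivative (criticalPoly u)).roots = Finset.univ.val.map u := by
  rw [derivative_criticalPoly, roots_C_mul _ (by exact_mod_cast m.succ_ne_zero),
    Finset.prod_eq_multiset_prod, ← roots_multiset_prod_X_sub_C (Finset.univ.val.map u),
    Multiset.map_map]
  rfl

theorem eq_zero_of_theta_eq_zero {u : Fin m → ℂ} (h : Theta u = 0) : u = 0 := by
  have hroot : ∀ i, (criticalPoly u).eval (u i) = 0 := fun i => congrFun h i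
  have hcount := card_roots_derivative_add_card_toFinset_le (criticalPoly_ne_zero u)
    fun w hw => by
      obtain ⟨i, -, rfl⟩ := Multiset.mem_map.1 (roots_derivative_criticalPoly u ▸ hw)
      exact hroot i
  have hT : (derivative (criticalPoly u)).roots.toFinset.card ≤ 1 := by
    have hdeg := (card_roots' (criticalPoly u)).trans (natDegree_criticalPoly_le u)
    have hcard : Multiset.card (derivative (criticalPoly u)).roots = m := by
      simp [roots_derivative_criticalPoly]
    omega
  funext i
  have hall : ∀ j, u j = u i := fun j =>
    Finset.card_le_one.1 hT _ (by simp [roots_derivative_criticalPoly]) _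
      (by simp [roots_derivative_criticalPoly])
  have hpow : criticalPoly u = (X - C (u i)) ^ (m + 1) := by
    refine eq_of_derivative_eq_of_eval_eq ?_ (a := u i) (by simpa using hroot i)
    rw [derivative_criticalPoly, derivative_X_sub_C_pow, Finset.prod_congr rfl fun j _ => by
      rw [hall j], Finset.prod_const, Finset.card_univ, Fintype.card_fin]
    push_cast
    simp
  simpa [hpow] using eval_zero_criticalPoly u

theorem isProperMap_theta : IsProperMap (Theta (m := m)) := by
  refine isProperMap_of_homogeneous m.succ_ne_zero continuous_theta (fun t ht u => ?_)
    fun u => eq_zero_of_theta_eq_zero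
  rw [RCLike.real_smul_eq_coe_smul (K := ℂ) t u, RCLike.real_smul_eq_coe_smul (K := ℂ)]
  exact (theta_smul (Complex.ofReal_ne_zero.2 ht.ne') u).trans (by simp)

end CriticalPoly

theorem theta_preimage_close_general
    (n : ℕ) (v : Fin (n - 1) → ℂ) (ρ : ℝ) (hρ : 0 < ρ) :
    ∃ ν > 0, ∀ vh : Fin (n - 1) → ℂ, ‖v - vh‖ < ν →
      ∀ uh : Fin (n - 1) → ℂ, Theta uh = vh →
        ∃ u : Fin (n - 1) → ℂ, Theta u = v ∧ ‖u - uh‖ < ρ := by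
  obtain ⟨ν, hν, hfiber⟩ := Metric.eventually_nhds_iff.1 <|
    isProperMap_theta.isClosedMap.eventually_forall_fiber_exists_dist_lt v hρ
  refine ⟨ν, hν, fun vh hvh uh huh => ?_⟩
  obtain ⟨u, hu, hdist⟩ := hfiber (by rwa [dist_eq_norm, norm_sub_rev]) uh huh
  exact ⟨u, hu, by rwa [← dist_eq_norm]⟩

/-- If `v̂` is close to `v`, then any point `û` of `Θ⁻¹(v̂)` is close to some point of
`Θ⁻¹(v)`. -/
theorem theta_preimage_close
    (n : ℕ) (hn : 2 ≤ n) (v : Fin (n - 1) → ℂ) (ρ : ℝ) (hρ : 0 < ρ) :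
    ∃ ν > 0, ∀ vh : Fin (n - 1) → ℂ, ‖v - vh‖ < ν →
      ∀ uh : Fin (n - 1) → ℂ, Theta uh = vh →
        ∃ u : Fin (n - 1) → ℂ, Theta u = v ∧ ‖u - uh‖ < ρ :=
  theta_preimage_close_general n v ρ hρ
end

section
/- Let (f,G) be a generalized finite Blaschke product, let η > 0, and let G' ⊆ G be a compact set containing no zeros of f'. Then there exists τ > 0 such that for every function g analytic on G satisfying |f(z) − g(z)| < τ for all z ∈ G, the following two statements hold: (1) for every z₀ ∈ G' and every w ∈ ℂ with |w − f(z₀)| < τ, there exists z₁ ∈ G with |z₁ − z₀| < η and g(z₁) = w; (2) for every z₀ ∈ G' and every w ∈ ℂ with |w − g(z₀)| < τ, there exists z₁ ∈ G with |z₁ − z₀| < η and f(z₁) = w. -/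
/-!
Let `m > 0` bound `|f'|` from below on `G'`. On a closed disc of radius `r` about `z₀ ∈ G'` on
which `f'` stays within `m / 2` of `f'(z₀)`, the mean value inequality gives
`|f z - f z₀| ≥ m r / 2` on the boundary circle, and compactness of `G'` makes `r` uniform in `z₀`.
A perturbation by less than a quarter of this gap keeps the value at the centre strictly closer
to `w` than the values on the circle, so the maximum modulus principle for `1 / (h - w)` forces
`h` to attain `w` inside the circle.
-/

open Metric Set

/-- `(f, G)` is a generalized finite Blaschke product: `G` is open, bounded and simply
connected, `f` is analytic on an open neighborhood of the closure of `G`, `|f| = 1` on the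
boundary of `G`, and `f' ≠ 0` on the boundary of `G`. -/
structure IsGFBP (f : ℂ → ℂ) (G : Set ℂ) : Prop where
  isOpen : IsOpen G
  nonempty : G.Nonempty
  bounded : Bornology.IsBounded G
  simplyConnected : SimplyConnectedSpace G
  analytic : ∃ U : Set ℂ, IsOpen U ∧ closure G ⊆ U ∧ ∀ z ∈ U, AnalyticAt ℂ f z
  boundary_mod : ∀ z ∈ frontier G, ‖f z‖ = 1
  boundary_deriv : ∀ z ∈ frontier G, deriv f z ≠ 0

theorem IsCompact.exists_pos_forall_le_norm {X E : Type*} [TopologicalSpace X]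
    [NormedAddCommGroup E] {K : Set X} {φ : X → E} (hK : IsCompact K) (hφ : ContinuousOn φ K)
    (hφ₀ : ∀ x ∈ K, φ x ≠ 0) : ∃ m > 0, ∀ x ∈ K, m ≤ ‖φ x‖ := by
  rcases K.eq_empty_or_nonempty with rfl | hne
  · exact ⟨1, one_pos, fun x hx => hx.elim⟩
  obtain ⟨x₀, hx₀, hmin⟩ := hK.exists_isMinOn hne hφ.norm
  exact ⟨‖φ x₀‖, norm_pos_iff.2 (hφ₀ x₀ hx₀), fun x hx => hmin hx⟩

theorem IsCompact.exists_pos_forall_closedBall_subset_dist_le {X Y : Type*}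
    [PseudoMetricSpace X] [ProperSpace X] [PseudoMetricSpace Y] {K U : Set X} {φ : X → Y}
    (hK : IsCompact K) (hU : IsOpen U) (hKU : K ⊆ U) (hφ : ContinuousOn φ U)
    {ε : ℝ} (hε : 0 < ε) :
    ∃ δ > 0, ∀ z ∈ K, closedBall z δ ⊆ U ∧ ∀ x ∈ closedBall z δ, dist (φ x) (φ z) ≤ ε := by
  obtain ⟨δ₀, hδ₀, hthick⟩ := hK.exists_cthickening_subset_open hU hKU
  obtain ⟨δ₁, hδ₁, hφδ₁⟩ := uniformContinuousOn_iff_le.1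
    (hK.cthickening.uniformContinuousOn_of_continuous (hφ.mono hthick)) ε hε
  refine ⟨min δ₀ δ₁, lt_min hδ₀ hδ₁, fun z hz => ?_⟩
  have hball : closedBall z (min δ₀ δ₁) ⊆ cthickening δ₀ K :=
    (closedBall_subset_closedBall (min_le_left _ _)).trans (closedBall_subset_cthickening hz δ₀)
  refine ⟨hball.trans hthick, fun x hx => hφδ₁ x (hball hx) z (self_subset_cthickening K hz) ?_⟩
  exact (mem_closedBall.1 hx).trans (min_le_right _ _)

theorem Convex.mul_norm_sub_le_norm_image_sub {𝕜 E : Type*} [RCLike 𝕜] [NormedAddCommGroup E]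
    [NormedSpace 𝕜 E] {f f' : 𝕜 → E} {s : Set 𝕜} (hs : Convex ℝ s)
    (hf : ∀ x ∈ s, HasDerivWithinAt f (f' x) s x) {a : E} {C : ℝ}
    (hC : ∀ x ∈ s, ‖f' x - a‖ ≤ C) {x y : 𝕜} (hx : x ∈ s) (hy : y ∈ s) :
    (‖a‖ - C) * ‖y - x‖ ≤ ‖f y - f x‖ := by
  have hlin : ‖f y - f x - (y - x) • a‖ ≤ C * ‖y - x‖ := by
    have := hs.norm_image_sub_le_of_norm_hasDerivWithin_le (f := fun z => f z - z • a)
      (fun z hz => (hf z hz).sub (hasDerivWithinAt_id z s |>.smul_const a))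
      (fun z hz => by simpa using hC z hz) hx hy
    rwa [sub_sub_sub_comm, ← sub_smul] at this
  have htri := norm_sub_norm_le ((y - x) • a) (f y - f x)
  rw [norm_smul, norm_sub_rev ((y - x) • a)] at htri
  linarith

theorem exists_mem_ball_eq_of_norm_sub_lt_of_le_sphere {h : ℂ → ℂ} {z₀ w : ℂ} {r c : ℝ}
    (hr : 0 < r) (hh : DifferentiableOn ℂ h (closedBall z₀ r))
    (hsphere : ∀ z ∈ sphere z₀ r, c ≤ ‖h z - w‖) (hz₀ : ‖h z₀ - w‖ < c) :
    ∃ z ∈ ball z₀ r, h z = w := by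
  by_contra! hw
  have hc : 0 < c := (norm_nonneg _).trans_lt hz₀
  have hne : ∀ z ∈ closedBall z₀ r, h z - w ≠ 0 := by
    rw [← ball_union_sphere]
    rintro z (hz | hz)
    · exact sub_ne_zero.2 (hw z hz)
    · exact norm_pos_iff.1 (hc.trans_le (hsphere z hz))
  have hinv : DiffContOnCl ℂ (fun z => (h z - w)⁻¹) (ball z₀ r) :=
    ((hh.sub_const w).inv hne).diffContOnCl_ball subset_rfl
  have hmax : ‖(h z₀ - w)⁻¹‖ ≤ c⁻¹ := by
    refine Complex.norm_le_of_forall_mem_frontier_norm_le isBounded_ball hinv (fun z hz => ?_)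
      (subset_closure (mem_ball_self hr))
    rw [frontier_ball z₀ hr.ne'] at hz
    rw [norm_inv]
    exact inv_anti₀ hc (hsphere z hz)
  rw [norm_inv, inv_le_inv₀ (norm_pos_iff.2 (hne z₀ (mem_closedBall_self hr.le))) hc] at hmax
  linarith

theorem exists_mem_ball_eq_of_norm_sub_lt_of_add_le_sphere {f h : ℂ → ℂ} {z₀ w : ℂ} {r c : ℝ}
    (hr : 0 < r) (hh : DifferentiableOn ℂ h (closedBall z₀ r))
    (hsphere : ∀ z ∈ sphere z₀ r, c + ‖f z - h z‖ + ‖w - f z₀‖ ≤ ‖f z - f z₀‖)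
    (hz₀ : ‖h z₀ - w‖ < c) :
    ∃ z ∈ ball z₀ r, h z = w := by
  refine exists_mem_ball_eq_of_norm_sub_lt_of_le_sphere hr hh (fun z hz => ?_) hz₀
  have htri : ‖f z - f z₀‖ ≤ ‖f z - h z‖ + ‖h z - w‖ + ‖w - f z₀‖ := by
    simpa using norm_add₃_le (a := f z - h z) (b := h z - w) (c := w - f z₀)
  linarith [hsphere z hz]

theorem IsCompact.exists_forall_sphere_le_norm_sub {f : ℂ → ℂ} {G K : Set ℂ} (hG : IsOpen G)
    (hf : AnalyticOnNhd ℂ f G) (hK : IsCompact K) (hKG : K ⊆ G)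
    (hf' : ∀ z ∈ K, deriv f z ≠ 0) {η : ℝ} (hη : 0 < η) :
    ∃ r > 0, r ≤ η ∧ ∃ c > 0, ∀ z₀ ∈ K,
      closedBall z₀ r ⊆ G ∧ ∀ z ∈ sphere z₀ r, c ≤ ‖f z - f z₀‖ := by
  obtain ⟨m, hm, hmK⟩ := hK.exists_pos_forall_le_norm (hf.deriv.continuousOn.mono hKG) hf'
  obtain ⟨δ, hδ, hδK⟩ :=
    hK.exists_pos_forall_closedBall_subset_dist_le hG hKG hf.deriv.continuousOn (half_pos hm)
  set r := min δ η
  have hr : 0 < r := lt_min hδ hη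
  refine ⟨r, hr, min_le_right _ _, m / 2 * r, by positivity, fun z₀ hz₀ => ?_⟩
  obtain ⟨hball, hdist⟩ := hδK z₀ hz₀
  have hsub : closedBall z₀ r ⊆ closedBall z₀ δ := closedBall_subset_closedBall (min_le_left _ _)
  refine ⟨hsub.trans hball, fun z hz => ?_⟩
  have hlower := (convex_closedBall z₀ r).mul_norm_sub_le_norm_image_sub
    (fun x hx => (hf x (hball (hsub hx))).differentiableAt.hasDerivAt.hasDerivWithinAt)
    (fun x hx => (dist_eq_norm _ _).symm.trans_le (hdist x (hsub hx)))
    (mem_closedBall_self hr.le) (sphere_subset_closedBall hz)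
  rw [mem_sphere_iff_norm.1 hz] at hlower
  linarith [mul_le_mul_of_nonneg_right (hmK z₀ hz₀) hr.le]

/-- If `g` is analytic on `G` and uniformly close to `f` on `G`, then near any point `z₀`
of a compact set `G' ⊆ G` free of critical points of `f`, `g` attains every value close to
`f(z₀)` and `f` attains every value close to `g(z₀)`. -/
theorem close_functions_attain_close_values
    (f : ℂ → ℂ) (G : Set ℂ) (hfG : IsGFBP f G)
    (η : ℝ) (hη : 0 < η)
    (G' : Set ℂ) (hG'sub : G' ⊆ G) (hG'cpt : IsCompact G')
    (hG'crit : ∀ z ∈ G', deriv f z ≠ 0) :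
    ∃ τ > 0, ∀ g : ℂ → ℂ, (∀ z ∈ G, AnalyticAt ℂ g z) →
      (∀ z ∈ G, ‖f z - g z‖ < τ) →
      (∀ z₀ ∈ G', ∀ w : ℂ, ‖w - f z₀‖ < τ →
        ∃ z₁ ∈ G, ‖z₁ - z₀‖ < η ∧ g z₁ = w) ∧
      (∀ z₀ ∈ G', ∀ w : ℂ, ‖w - g z₀‖ < τ →
        ∃ z₁ ∈ G, ‖z₁ - z₀‖ < η ∧ f z₁ = w) := by
  obtain ⟨U, -, hGU, hfU⟩ := hfG.analytic
  have hf : AnalyticOnNhd ℂ f G := fun z hz => hfU z (hGU (subset_closure hz))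
  obtain ⟨r, hr, hrη, c, hc, hK⟩ :=
    hG'cpt.exists_forall_sphere_le_norm_sub hfG.isOpen hf hG'sub hG'crit hη
  have hnear : ∀ z₀ ∈ G', ∀ z ∈ ball z₀ r, z ∈ G ∧ ‖z - z₀‖ < η := fun z₀ hz₀ z hz =>
    ⟨(hK z₀ hz₀).1 (ball_subset_closedBall hz), (mem_ball_iff_norm.1 hz).trans_le hrη⟩
  refine ⟨c / 4, by positivity, fun g hg hfg => ⟨fun z₀ hz₀ w hw => ?_, fun z₀ hz₀ w hw => ?_⟩⟩
  all_goals obtain ⟨hball, hsphere⟩ := hK z₀ hz₀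
  · obtain ⟨z, hz, hgz⟩ := exists_mem_ball_eq_of_norm_sub_lt_of_add_le_sphere
      (f := f) (w := w) (c := c / 2) hr
      (fun z hz => (hg z (hball hz)).differentiableWithinAt)
      (fun z hz => by linarith [hsphere z hz, hfg z (hball (sphere_subset_closedBall hz))])
      (by linarith [hfg z₀ (hG'sub hz₀), norm_sub_le_norm_sub_add_norm_sub (g z₀) (f z₀) w,
        norm_sub_rev (g z₀) (f z₀), norm_sub_rev (f z₀) w])
    exact ⟨z, (hnear z₀ hz₀ z hz).1, (hnear z₀ hz₀ z hz).2, hgz⟩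
  · have hw' : ‖w - f z₀‖ < c / 2 := by
      linarith [hfg z₀ (hG'sub hz₀), norm_sub_le_norm_sub_add_norm_sub w (g z₀) (f z₀),
        norm_sub_rev (g z₀) (f z₀)]
    obtain ⟨z, hz, hfz⟩ := exists_mem_ball_eq_of_norm_sub_lt_of_add_le_sphere
      (f := f) (w := w) (c := c / 2) hr
      (fun z hz => (hf z (hball hz)).differentiableWithinAt)
      (fun z hz => by rw [sub_self, norm_zero, add_zero]; linarith [hsphere z hz])
      (by linarith [norm_sub_rev (f z₀) w])
    exact ⟨z, (hnear z₀ hz₀ z hz).1, (hnear z₀ hz₀ z hz).2, hfz⟩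
end

section
/- Let D ⊆ ℂ be an open simply connected set, let f be a nonconstant meromorphic function on D, let ε > 0, and let Λ be a connected component of {z ∈ D : |f(z)| = ε} which is compact (in particular Λ ⊆ D and Λ does not meet the boundary of D) and which contains no zero of f'. Then Λ is homeomorphic to the unit circle. -/
/-!
Near a point of a level curve `Λ` without critical points, `f` is a local biholomorphism, and the
intersection of a circle with a disc centred on it is an arc; hence near each of its points `Λ` is
the full preimage of the circle under the local inverse of `f`, and `z ↦ f z / ε` is a local
homeomorphism from `Λ` to the unit circle. Since `Λ` is compact, it is a covering map.

A compact connected covering space `E` of the circle is a circle: lift `t ↦ exp (t * I)` to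
`G : ℝ → E`. Two lifts that agree at one point agree everywhere, so `G s = G t` exactly when `s - t`
is a period of `G`. The periods lie in `2πℤ` and are not all zero because the fibres are finite, so
they form a group `Tℤ`; the image of `G` is open and compact, hence all of `E`, and `E ≃ₜ ℝ ⧸ Tℤ`.
-/

open scoped Topology

/-- `f` has a pole at `z`: `|f| → ∞` as we approach `z` from punctured neighborhoods. -/
def HasPoleAt (f : ℂ → ℂ) (z : ℂ) : Prop :=
  Filter.Tendsto (fun w => ‖f w‖) (𝓝[≠] z) Filter.atTop

/-- The level set `{z ∈ D : |f z| = ε}` (poles, where `|f| = ∞`, are excluded). -/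
def levelSet (f : ℂ → ℂ) (D : Set ℂ) (ε : ℝ) : Set ℂ :=
  {z | z ∈ D ∧ ¬ HasPoleAt f z ∧ ‖f z‖ = ε}

/-- `C` is a connected component of the set `S`. -/
def IsCompOf (C S : Set ℂ) : Prop :=
  ∃ x ∈ S, C = connectedComponentIn S x

open Set Function Metric Complex AddSubgroup

def Function.periods {α β : Type*} [AddGroup α] (g : α → β) : AddSubgroup α where
  carrier := {c | Periodic g c}
  add_mem' := Periodic.add_period
  zero_mem' x := by rw [add_zero]
  neg_mem' := Periodic.neg

theorem AddSubgroup.exists_pos_eq_zmultiples_of_le_zmultiples {H : AddSubgroup ℝ} {a : ℝ}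
    (hH : H ≠ ⊥) (hle : H ≤ zmultiples a) : ∃ T > 0, H = zmultiples T := by
  rcases H.dense_or_cyclic with hd | ⟨g, rfl⟩
  · have ha : a ≠ 0 := by
      rintro rfl
      exact hH (eq_bot_iff.mpr (by simpa using hle))
    obtain ⟨h, hh, h0, hlt⟩ := hd.exists_between (abs_pos.mpr ha)
    obtain ⟨n, rfl⟩ := mem_zmultiples_iff.mp (hle hh)
    rw [zsmul_eq_mul] at h0 hlt
    have hn : (1 : ℝ) ≤ |(n : ℝ)| := by
      have : n ≠ 0 := by rintro rfl; simp at h0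
      exact_mod_cast Int.one_le_abs this
    have : |a| ≤ n * a := by
      calc |a| ≤ |(n : ℝ)| * |a| := le_mul_of_one_le_left (abs_nonneg a) hn
        _ = n * a := by rw [← abs_mul, abs_of_pos h0]
    linarith
  · rw [← zmultiples_eq_closure] at hH ⊢
    refine ⟨|g|, abs_pos.mpr fun hg => hH (by simp [hg]), ?_⟩
    rcases abs_choice g with h | h <;> rw [h]
    exact zmultiples_neg.symm

theorem AddCircle.nonempty_homeomorph_of_surjective {E : Type*} [TopologicalSpace E] [T2Space E]
    {T : ℝ} [Fact (0 < T)] {G : ℝ → E} (hc : Continuous G) (hs : Surjective G)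
    (hG : ∀ s t, G s = G t ↔ s - t ∈ zmultiples T) : Nonempty (AddCircle T ≃ₜ E) := by
  have hper : Periodic G T := fun x => (hG _ _).mpr (by simp)
  have hbij : Bijective hper.lift := by
    refine ⟨fun a b => ?_, fun e => ?_⟩
    · induction a using QuotientAddGroup.induction_on
      induction b using QuotientAddGroup.induction_on
      rw [hper.lift_coe, hper.lift_coe, QuotientAddGroup.eq, neg_add_eq_sub]
      intro h
      exact (hG _ _).mp h.symm
    · obtain ⟨t, rfl⟩ := hs e
      exact ⟨t, hper.lift_coe t⟩
  exact ⟨(hc.quotient_liftOn' _).homeoOfEquivCompactToT2 (f := Equiv.ofBijective _ hbij)⟩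

theorem IsLocallyInjective.isLocalHomeomorph {X Y : Type*} [TopologicalSpace X]
    [TopologicalSpace Y] {g : X → Y} (hi : IsLocallyInjective g) (hc : Continuous g)
    (ho : IsOpenMap g) : IsLocalHomeomorph g :=
  isLocalHomeomorph_iff_isOpenEmbedding_restrict.mpr fun x => by
    obtain ⟨U, hU, hxU, hinj⟩ := hi x
    exact ⟨U, hU.mem_nhds hxU, .of_continuous_injective_isOpenMap (hc.comp continuous_subtype_val)
      (injOn_iff_injective.mp hinj) (ho.comp hU.isOpenMap_subtype_val)⟩

theorem periods_le_zmultiples_of_comp_eq_circleExp {E : Type*} {p : E → Circle} {G : ℝ → E}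
    (hG : p ∘ G = Circle.exp) : periods G ≤ zmultiples (2 * Real.pi) := by
  intro τ hτ
  have hexp : Circle.exp τ = Circle.exp 0 := by rw [← hG]; exact congrArg p (by simpa using hτ 0)
  obtain ⟨m, hm⟩ := Circle.exp_eq_exp.mp hexp
  exact mem_zmultiples_iff.mpr ⟨m, by rw [hm, zero_add, zsmul_eq_mul]⟩

namespace IsCoveringMap

variable {E : Type*} [TopologicalSpace E] {p : E → Circle}

theorem exists_comp_eq_circleExp [Nonempty E] (hp : IsCoveringMap p) :
    ∃ G : C(ℝ, E), p ∘ G = Circle.exp := by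
  obtain ⟨e₀⟩ := ‹Nonempty E›
  obtain ⟨t₀, ht₀⟩ := Circle.exp_surjective (p e₀)
  obtain ⟨G, ⟨-, hG⟩, -⟩ := hp.existsUnique_continuousMap_lifts Circle.exp t₀ e₀ ht₀.symm
  exact ⟨G, hG⟩

variable {G : C(ℝ, E)}

theorem apply_eq_apply_iff_sub_mem_periods (hp : IsCoveringMap p) (hG : p ∘ G = Circle.exp)
    {s t : ℝ} : G s = G t ↔ s - t ∈ periods G := by
  refine ⟨fun hst => ?_, fun h => by simpa using h t⟩
  have hexp : Circle.exp s = Circle.exp t := by rw [← hG]; exact congrArg p hst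
  obtain ⟨m, rfl⟩ := Circle.exp_eq_exp.mp hexp
  have hshift : p ∘ (G ∘ (· + (t + m * (2 * Real.pi) - t))) = p ∘ G := by
    ext1 x
    rw [add_sub_cancel_left, ← comp_assoc, hG, comp_apply]
    exact Circle.periodic_exp.int_mul m x
  exact congrFun (hp.eq_of_comp_eq (G.continuous.comp (continuous_add_const _)) G.continuous
    hshift t (by simpa using hst))

theorem periods_ne_bot [CompactSpace E] (hp : IsCoveringMap p) (hG : p ∘ G = Circle.exp) :
    periods G ≠ ⊥ := by
  have hfin : (p ⁻¹' {Circle.exp 0}).Finite :=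
    (isClosed_singleton.preimage hp.continuous).isCompact.finite
      (isDiscrete_iff_discreteTopology.mpr (hp _).discreteTopology_fiber)
  have : Finite (p ⁻¹' {Circle.exp 0}) := hfin.to_subtype
  have hmem (n : ℕ) : G (n * (2 * Real.pi)) ∈ p ⁻¹' {Circle.exp 0} := by
    rw [mem_preimage, ← comp_apply (f := p), hG, mem_singleton_iff]
    exact_mod_cast Circle.periodic_exp.nat_mul_eq n
  obtain ⟨k, l, hkl, heq⟩ := Finite.exists_ne_map_eq_of_infinite fun n => (⟨_, hmem n⟩ : p ⁻¹' _)
  have hper := (hp.apply_eq_apply_iff_sub_mem_periods hG).mp (congrArg Subtype.val heq)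
  refine fun hbot => hkl ?_
  rw [hbot, AddSubgroup.mem_bot, ← sub_mul, mul_eq_zero, sub_eq_zero] at hper
  exact_mod_cast hper.resolve_right (by positivity)

theorem surjective_of_periodic [T2Space E] [ConnectedSpace E] (hp : IsCoveringMap p)
    (hG : p ∘ G = Circle.exp) {T : ℝ} (hT : 0 < T) (hper : Periodic G T) : Surjective G := by
  have hopen : IsOpen (range G) :=
    (IsLocalHomeomorph.of_comp (hG ▸ isLocalHomeomorph_circleExp) hp.isLocalHomeomorph
      G.continuous).isOpenMap.isOpen_range
  have hclosed : IsClosed (range G) := by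
    rw [← hper.image_Icc hT 0]
    exact (isCompact_Icc.image G.continuous).isClosed
  exact range_eq_univ.mp (IsClopen.eq_univ ⟨hclosed, hopen⟩ (range_nonempty G))

theorem nonempty_homeomorph_circle [CompactSpace E] [T2Space E] [ConnectedSpace E]
    (hp : IsCoveringMap p) : Nonempty (E ≃ₜ Circle) := by
  have : Nonempty E := ConnectedSpace.toNonempty
  obtain ⟨G, hG⟩ := hp.exists_comp_eq_circleExp
  obtain ⟨T, hT, hTG⟩ := exists_pos_eq_zmultiples_of_le_zmultiples (hp.periods_ne_bot hG)
    (periods_le_zmultiples_of_comp_eq_circleExp hG)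
  have : Fact (0 < T) := ⟨hT⟩
  have hper : Periodic G T := (hTG ▸ mem_zmultiples T : T ∈ periods G)
  obtain ⟨e⟩ := AddCircle.nonempty_homeomorph_of_surjective G.continuous
    (hp.surjective_of_periodic hG hT hper) fun s t => hTG ▸ hp.apply_eq_apply_iff_sub_mem_periods hG
  exact ⟨e.symm.trans (AddCircle.homeomorphCircle hT.ne')⟩

end IsCoveringMap

theorem Complex.norm_exp_mul_I_sub_one_le {x y : ℝ} (hxy : |x| ≤ |y|) (hy : |y| ≤ Real.pi) :
    ‖exp (x * I) - 1‖ ≤ ‖exp (y * I) - 1‖ := by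
  have key {t : ℝ} (ht : |t| ≤ Real.pi) : ‖exp (t * I) - 1‖ = 2 * Real.sin (|t| / 2) := by
    rw [mul_comm, norm_exp_I_mul_ofReal_sub_one, norm_mul, Real.norm_two, Real.norm_eq_abs,
      Real.abs_sin_eq_sin_abs_of_abs_le_pi (by rw [abs_div, abs_two]; linarith [abs_nonneg t]),
      abs_div, abs_two]
  rw [key (hxy.trans hy), key hy]
  gcongr
  exact Real.sin_le_sin_of_le_of_le_pi_div_two (by linarith [abs_nonneg x, Real.pi_pos])
    (by linarith) (by linarith)

theorem Complex.isPreconnected_sphere_inter_ball {w₀ : ℂ} {r : ℝ} (ρ : ℝ) (hw₀ : ‖w₀‖ = r) :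
    IsPreconnected (sphere (0 : ℂ) r ∩ ball w₀ ρ) := by
  refine isPreconnected_of_forall w₀ fun w ⟨hw, hwρ⟩ => ?_
  rw [mem_sphere_zero_iff_norm] at hw
  set θ := arg (w / w₀)
  have hw_eq : w₀ * exp (θ * I) = w := by
    rcases eq_or_ne w₀ 0 with rfl | h0
    · rw [norm_zero] at hw₀
      rw [zero_mul, eq_comm, ← norm_eq_zero, hw, hw₀]
    · have h1 : ‖w / w₀‖ = 1 := by
        rw [norm_div, hw, hw₀, div_self (hw₀ ▸ norm_ne_zero_iff.mpr h0)]
      have := norm_mul_exp_arg_mul_I (w / w₀)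
      rw [h1, ofReal_one, one_mul] at this
      rw [this, mul_div_cancel₀ _ h0]
  -- rotate `w₀` towards `w` along the shorter arc: the distance to `w₀` only grows
  let γ : ℝ → ℂ := fun s => w₀ * exp ((s * θ : ℝ) * I)
  refine ⟨γ '' Icc 0 1, ?_, ⟨0, by simp [γ]⟩, ⟨1, by simp [γ, hw_eq]⟩,
    isPreconnected_Icc.image _ (by fun_prop)⟩
  rintro _ ⟨s, ⟨hs0, hs1⟩, rfl⟩
  refine ⟨by
    simp only [γ, mem_sphere_zero_iff_norm, norm_mul, norm_exp_ofReal_mul_I, hw₀, mul_one], ?_⟩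
  rw [mem_ball, dist_eq] at hwρ ⊢
  calc ‖γ s - w₀‖ = ‖w₀‖ * ‖exp ((s * θ : ℝ) * I) - 1‖ := by
        rw [← norm_mul, mul_sub, mul_one]
    _ ≤ ‖w₀‖ * ‖exp (θ * I) - 1‖ := by
        gcongr
        refine norm_exp_mul_I_sub_one_le ?_ (abs_le.mpr ⟨(neg_pi_lt_arg _).le, arg_le_pi _⟩)
        rw [abs_mul, abs_of_nonneg hs0]
        exact mul_le_of_le_one_left (abs_nonneg _) hs1
    _ = ‖w - w₀‖ := by rw [← norm_mul, mul_sub, mul_one, hw_eq]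
    _ < ρ := hwρ

theorem ContinuousAt.not_hasPoleAt {f : ℂ → ℂ} {z : ℂ} (h : ContinuousAt f z) :
    ¬ HasPoleAt f z := fun hp =>
  not_tendsto_atTop_of_tendsto_nhds (h.norm.tendsto.mono_left nhdsWithin_le_nhds) hp

namespace IsCompOf

variable {Λ S : Set ℂ}

theorem subset (hΛ : IsCompOf Λ S) : Λ ⊆ S := by
  obtain ⟨x, -, rfl⟩ := hΛ
  exact connectedComponentIn_subset _ _

theorem isConnected (hΛ : IsCompOf Λ S) : IsConnected Λ := by
  obtain ⟨x, hx, rfl⟩ := hΛ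
  exact isConnected_connectedComponentIn_iff.mpr hx

theorem subset_of_isPreconnected (hΛ : IsCompOf Λ S) {A : Set ℂ} (hA : IsPreconnected A)
    (hAS : A ⊆ S) {z : ℂ} (hzΛ : z ∈ Λ) (hzA : z ∈ A) : A ⊆ Λ := by
  obtain ⟨x, -, rfl⟩ := hΛ
  rw [connectedComponentIn_eq hzΛ]
  exact hA.subset_connectedComponentIn hzA hAS

end IsCompOf

section

variable {D Λ : Set ℂ} {f : ℂ → ℂ} {ε : ℝ}

theorem analyticAt_of_mem_levelSet (hgen : ∀ z ∈ D, AnalyticAt ℂ f z ∨ HasPoleAt f z) {z : ℂ}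
    (hz : z ∈ levelSet f D ε) : AnalyticAt ℂ f z :=
  (hgen z hz.1).resolve_right hz.2.1

theorem IsCompOf.exists_openPartialHomeomorph (hD : IsOpen D) (hΛ : IsCompOf Λ (levelSet f D ε))
    {z : ℂ} (hz : z ∈ Λ) (hfz : AnalyticAt ℂ f z) (hf'z : deriv f z ≠ 0) :
    ∃ e : OpenPartialHomeomorph ℂ ℂ, z ∈ e.source ∧ EqOn f e e.source ∧
      e.source ∩ f ⁻¹' sphere 0 ε ⊆ Λ := by
  have hstrict := hfz.hasStrictDerivAt.hasStrictFDerivAt_equiv hf'z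
  set e₀ := hstrict.toOpenPartialHomeomorph f
  have he₀ : (e₀ : ℂ → ℂ) = f := hstrict.toOpenPartialHomeomorph_coe
  have hze₀ : z ∈ e₀.source := hstrict.mem_toOpenPartialHomeomorph_source
  set U := e₀.source ∩ (D ∩ {y | AnalyticAt ℂ f y})
  have hU : IsOpen U := e₀.open_source.inter (hD.inter (isOpen_analyticAt ℂ f))
  have hzU : z ∈ U := ⟨hze₀, (hΛ.subset hz).1, hfz⟩
  obtain ⟨ρ, hρ, hball⟩ := Metric.mem_nhds_iff.mp (e₀.image_mem_nhds hze₀ (hU.mem_nhds hzU))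
  rw [he₀] at hball
  have hfz : ‖f z‖ = ε := (hΛ.subset hz).2.2
  have hsymm {w : ℂ} (hw : w ∈ ball (f z) ρ) : e₀.symm w ∈ U ∧ f (e₀.symm w) = w := by
    obtain ⟨u, hu, rfl⟩ := hball hw
    rw [← he₀, e₀.left_inv hu.1]
    exact ⟨hu, rfl⟩
  have hAΛ : e₀.symm '' (sphere 0 ε ∩ ball (f z) ρ) ⊆ Λ := by
    refine hΛ.subset_of_isPreconnected ?_ ?_ hz ⟨f z, ⟨?_, mem_ball_self hρ⟩, ?_⟩
    · refine (isPreconnected_sphere_inter_ball ρ hfz).image _ (e₀.symm.continuousOn.mono ?_)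
      rintro w ⟨-, hw⟩
      obtain ⟨u, hu, rfl⟩ := hball hw
      exact he₀ ▸ e₀.map_source hu.1
    · rintro _ ⟨w, ⟨hwε, hw⟩, rfl⟩
      obtain ⟨⟨-, hD, han⟩, hfw⟩ := hsymm hw
      refine ⟨hD, han.continuousAt.not_hasPoleAt, ?_⟩
      rwa [hfw, ← mem_sphere_zero_iff_norm]
    · rwa [mem_sphere_zero_iff_norm]
    · rw [← he₀, e₀.left_inv hze₀]
  have hfU : ContinuousOn f U := fun y hy => hy.2.2.continuousAt.continuousWithinAt
  refine ⟨e₀.restrOpen _ (hfU.isOpen_inter_preimage hU isOpen_ball), ⟨hze₀, hzU, mem_ball_self hρ⟩,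
    fun y _ => by rw [OpenPartialHomeomorph.coe_restrOpen, he₀], ?_⟩
  rintro y ⟨⟨hy, -, hyρ⟩, hyε⟩
  refine hAΛ ⟨f y, ⟨hyε, hyρ⟩, ?_⟩
  rw [← he₀, e₀.left_inv hy]

theorem IsCompOf.isLocalHomeomorph (hD : IsOpen D)
    (hgen : ∀ z ∈ D, AnalyticAt ℂ f z ∨ HasPoleAt f z) (hΛ : IsCompOf Λ (levelSet f D ε))
    (hε : 0 < ε) (hcrit : ∀ z ∈ Λ, deriv f z ≠ 0) {p : Λ → Circle}
    (hp : ∀ z, (p z : ℂ) * ε = f z) : IsLocalHomeomorph p := by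
  have hfΛ (z : Λ) : AnalyticAt ℂ f z := analyticAt_of_mem_levelSet hgen (hΛ.subset z.2)
  choose e hze hfe hΛe using fun z : Λ =>
    hΛ.exists_openPartialHomeomorph hD z.2 (hfΛ z) (hcrit z z.2)
  have hε₀ : (ε : ℂ) ≠ 0 := ofReal_ne_zero.mpr hε.ne'
  refine IsLocallyInjective.isLocalHomeomorph (fun z => ⟨_,
    (e z).open_source.preimage continuous_subtype_val, hze z, fun a ha b hb hab => ?_⟩) ?_ ?_
  · refine Subtype.ext ((e z).injOn ha hb ?_)
    rw [← hfe z ha, ← hfe z hb, ← hp, ← hp, hab]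
  · have : Subtype.val ∘ p = fun z : Λ => f z / ε := funext fun z =>
      eq_div_of_mul_eq hε₀ (hp z)
    refine continuous_induced_rng.mpr (this ▸ ?_)
    exact (ContinuousOn.domRestrict fun z hz =>
      (hfΛ ⟨z, hz⟩).continuousAt.continuousWithinAt).div_const _
  · refine isOpenMap_iff_nhds_le.mpr fun z N hN => ?_
    obtain ⟨B, hB, hBN⟩ := (mem_nhds_subtype _ _ _).mp hN
    have himage : f '' (B ∩ (e z).source) ∈ 𝓝 (f z) := by
      rw [((hfe z).mono inter_subset_right).image_eq, hfe z (hze z)]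
      exact (e z).image_mem_nhds (hze z) (Filter.inter_mem hB ((e z).open_source.mem_nhds (hze z)))
    have hcoe : Filter.Tendsto (fun w : Circle => (w : ℂ) * ε) (𝓝 (p z)) (𝓝 (f z)) :=
      hp z ▸ (continuous_subtype_val.mul continuous_const).continuousAt
    filter_upwards [hcoe himage] with w ⟨y, ⟨hyB, hye⟩, hyw⟩
    have hyΛ : y ∈ Λ := hΛe z ⟨hye, by
      rw [mem_preimage, hyw, mem_sphere_zero_iff_norm, norm_mul, Circle.norm_coe, one_mul,
        norm_real, Real.norm_of_nonneg hε.le]⟩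
    have : p ⟨y, hyΛ⟩ = w := Circle.ext (mul_right_cancel₀ hε₀ ((hp _).trans hyw))
    exact this ▸ hBN hyB

end

theorem compact_noncritical_level_curve_is_circle_general
    (D : Set ℂ) (hD : IsOpen D)
    (f : ℂ → ℂ)
    (hgen : ∀ z ∈ D, AnalyticAt ℂ f z ∨ HasPoleAt f z)
    (ε : ℝ) (hε : 0 < ε)
    (Λ : Set ℂ) (hΛ : IsCompOf Λ (levelSet f D ε))
    (hcpt : IsCompact Λ)
    (hcrit : ∀ z ∈ Λ, deriv f z ≠ 0) :
    Nonempty (Λ ≃ₜ (Metric.sphere (0 : ℂ) 1 : Set ℂ)) := by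
  have : CompactSpace Λ := isCompact_iff_compactSpace.mp hcpt
  have : ConnectedSpace Λ := isConnected_iff_connectedSpace.mp hΛ.isConnected
  have hp (z : Λ) : (Circle.exp (arg (f z)) : ℂ) * ε = f z := by
    rw [Circle.coe_exp, mul_comm, ← (hΛ.subset z.2).2.2, norm_mul_exp_arg_mul_I]
  have hcover := isLocalHomeomorph_iff_isCoveringMap.mp (hΛ.isLocalHomeomorph hD hgen hε hcrit hp)
  obtain ⟨e⟩ := hcover.nonempty_homeomorph_circle
  -- `Circle` is definitionally the unit sphere of `ℂ`
  exact ⟨e.trans (Homeomorph.refl _)⟩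

/-- A compact level curve of a nonconstant meromorphic function on a simply connected open
set, containing no critical point, is homeomorphic to the unit circle. -/
theorem compact_noncritical_level_curve_is_circle
    (D : Set ℂ) (hD : IsOpen D) (hsc : SimplyConnectedSpace D)
    (f : ℂ → ℂ) (hf : MeromorphicOn f D)
    (hgen : ∀ z ∈ D, AnalyticAt ℂ f z ∨ HasPoleAt f z)
    (hnc : ¬ ∃ c : ℂ, ∀ z ∈ D, f z = c)
    (ε : ℝ) (hε : 0 < ε)
    (Λ : Set ℂ) (hΛ : IsCompOf Λ (levelSet f D ε))
    (hcpt : IsCompact Λ)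
    (hcrit : ∀ z ∈ Λ, deriv f z ≠ 0) :
    Nonempty (Λ ≃ₜ (Metric.sphere (0 : ℂ) 1 : Set ℂ)) :=
  compact_noncritical_level_curve_is_circle_general D hD f hgen ε hε Λ hΛ hcpt hcrit
end
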